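/- In the strategy that repeatedly augments a maximal flow f by a negative-weight residual cycle (with respect to the distance d(·, f') to a fixed reference maximal flow f'), the process terminates after at most d(f₀, f') ≤ 2ρ_N P iterations and terminates at a maximal flow f* minimizing d(·, f') over all maximal flows. -/

import Mathlib

open Finset

variable {V : Type*} [Fintype V] [DecidableEq V]

/-- An integral (nonnegative) flow with source `s`, sink `t`, capacities `c`. -/
def IsZFlow (c : V → V → ℤ) (s t : V) (f : V → V → ℤ) : Prop :=
  (∀ u v, 0 ≤ f u v) ∧ (∀ u v, f u v ≤ c u v) ∧
    ∀ v, v ≠ s → v ≠ t → ∑ u, f v u = ∑ u, f u v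

/-- The value of a flow: net flow out of the source. -/
def zvalue (f : V → V → ℤ) (s : V) : ℤ := ∑ u, f s u - ∑ u, f u s

/-- A maximal flow. -/
def IsZMaxFlow (c : V → V → ℤ) (s t : V) (f : V → V → ℤ) : Prop :=
  IsZFlow c s t f ∧ ∀ g, IsZFlow c s t g → zvalue g s ≤ zvalue f s

/-- Push one unit of flow along one residual step `(a, b, dir)`:
a residual arc from `a` to `b`; if `dir = true` it is a forward copy of the
arc `(a,b)` (flow increases by 1), otherwise it is the backward copy of the
arc `(b,a)` (flow decreases by 1). -/
def push1 (f : V → V → ℤ) (e : V × V × Bool) : V → V → ℤ :=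
  fun u v =>
    if e.2.2 then (if u = e.1 ∧ v = e.2.1 then f u v + 1 else f u v)
    else (if u = e.2.1 ∧ v = e.1 then f u v - 1 else f u v)

/-- Push one unit of flow along a residual cycle. -/
def push (f : V → V → ℤ) (g : List (V × V × Bool)) : V → V → ℤ :=
  g.foldl push1 f

/-- `g` is a simple cycle in the residual graph `G_f`: a nonempty list of
residual steps, with pairwise distinct start vertices, cyclically chained,
where forward steps use unsaturated arcs and backward steps use arcs
carrying positive flow. -/
def ResidualCycle (c f : V → V → ℤ) (g : List (V × V × Bool)) : Prop :=
  g ≠ [] ∧ (g.map fun e => e.1).Nodup ∧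
    (∀ i : Fin g.length,
      (g.get i).2.1 = (g.get ⟨((i : ℕ) + 1) % g.length, Nat.mod_lt _ i.pos⟩).1) ∧
    ∀ e ∈ g, if e.2.2 then f e.1 e.2.1 < c e.1 e.2.1 else 0 < f e.2.1 e.1

/-- The underlying arc of a residual step. -/
def arcOf (e : V × V × Bool) : V × V := if e.2.2 then (e.1, e.2.1) else (e.2.1, e.1)

/-- The weight of a residual cycle relative to the reference flow `fp`:
`-1` on steps over arcs of `X` where `f` and `fp` differ, `+1` on steps over
arcs of `X` where they agree, `0` elsewhere. -/
def cycleWeight (X : Finset (V × V)) (f fp : V → V → ℤ) (g : List (V × V × Bool)) : ℤ :=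
  (g.map fun e =>
    if arcOf e ∈ X then
      (if f (arcOf e).1 (arcOf e).2 ≠ fp (arcOf e).1 (arcOf e).2 then (-1 : ℤ) else 1)
    else 0).sum

/-- The transfer distance: number of arcs of `X` where the two flows differ. -/
def dist (X : Finset (V × V)) (f fp : V → V → ℤ) : ℕ :=
  (X.filter fun e => f e.1 e.2 ≠ fp e.1 e.2).card

/-!
Pushing one unit along a simple residual cycle preserves conservation and the flow value, and
because the arcs of `X` have unit capacity it changes `d(·, f')` by exactly the weight of the
cycle. So every iteration lowers `d` by at least one, and the process stops within
`d(f₀, f') ≤ #X` iterations. At a stopping flow `f`, the difference `f' - f` of two maximal flows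
is a circulation. If `f` and `f'` differed on an arc of `X`, a cut argument would give a path back
along the support of `f' - f`, closing with that arc into a simple residual cycle of negative
weight. Hence the final flow agrees with `f'` on `X`.
-/

open Relation

section Lists

variable {α ε : Type*}

theorem exists_nodup_isChain_cons_of_reflTransGen {r : α → α → Prop} {a b : α}
    (h : ReflTransGen r a b) :
    ∃ l, List.IsChain r (a :: l) ∧ (a :: l).getLast (List.cons_ne_nil _ _) = b ∧
      (a :: l).Nodup := by
  classical
  induction h using ReflTransGen.head_induction_on with
  | refl => exact ⟨[], .singleton _, rfl, List.nodup_singleton _⟩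
  | @head a b hab _ ih =>
    obtain ⟨l, hchain, hlast, hnodup⟩ := ih
    by_cases ha : a ∈ b :: l
    · obtain ⟨l₁, l₂, hsplit⟩ := List.append_of_mem ha
      rw [hsplit] at hchain hnodup
      refine ⟨l₂, hchain.right_of_append, ?_, hnodup.of_append_right⟩
      rw [← hlast]
      simp only [hsplit, List.getLast_append_of_ne_nil _ (List.cons_ne_nil _ _)]
    · exact ⟨b :: l, hchain.cons_cons hab, by rwa [List.getLast_cons_cons],
        List.nodup_cons.2 ⟨ha, hnodup⟩⟩

theorem exists_steps_of_isChain (src tgt : ε → α) {P : ε → Prop} :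
    ∀ {l : List α}, List.IsChain (fun x y => ∃ e, P e ∧ src e = x ∧ tgt e = y) l →
      ∃ p : List ε, (∀ e ∈ p, P e) ∧ p.map src = l.dropLast ∧ p.map tgt = l.tail
  | [], _ | [_], _ => ⟨[], by simp, rfl, rfl⟩
  | _ :: _ :: _, h => by
    obtain ⟨⟨e, he, hx, hy⟩, htail⟩ := List.isChain_cons_cons.1 h
    obtain ⟨p, hp, hsrc, htgt⟩ := exists_steps_of_isChain src tgt htail
    exact ⟨e :: p, List.forall_mem_cons.2 ⟨he, hp⟩, by simp [hx, hsrc], by simp [hy, htgt]⟩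

theorem map_eq_rotate_one_iff (src tgt : ε → α) (l : List ε) :
    l.map tgt = (l.map src).rotate 1 ↔
      ∀ i : Fin l.length,
        tgt (l.get i) = src (l.get ⟨(i + 1) % l.length, Nat.mod_lt _ i.pos⟩) := by
  simp only [List.ext_get_iff, List.length_map, List.length_rotate, List.get_eq_getElem,
    List.getElem_map, List.getElem_rotate, true_and]
  exact ⟨fun h i => h i i.2 i.2, fun h n hn _ => h ⟨n, hn⟩⟩

end Lists

theorem exists_le_not_of_decreasing_while {d : ℕ → ℕ} {P : ℕ → Prop}
    (h : ∀ i, P i → d (i + 1) < d i) : ∃ k ≤ d 0, ¬ P k := by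
  by_contra! hP
  have hdecr : ∀ i ≤ d 0 + 1, d i + i ≤ d 0 := by
    intro i
    induction i with
    | zero => simp
    | succ i ih => intro hi; have := h i (hP i (by omega)); have := ih (by omega); omega
  have := hdecr (d 0 + 1) le_rfl
  omega

def stepFlow (e : V × V × Bool) : V → V → ℤ :=
  fun u v => (if e = (u, v, true) then 1 else 0) - (if e = (v, u, false) then 1 else 0)

def netOutflow (v : V) : (V → V → ℤ) →+ ℤ where
  toFun f := ∑ u, f v u - ∑ u, f u v
  map_zero' := by simp
  map_add' f g := by simp only [Pi.add_apply, sum_add_distrib]; ring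

def IsResidualStep (c f : V → V → ℤ) (e : V × V × Bool) : Prop :=
  if e.2.2 then f e.1 e.2.1 < c e.1 e.2.1 else 0 < f e.2.1 e.1

def stepWeight (X : Finset (V × V)) (f fp : V → V → ℤ) (e : V × V × Bool) : ℤ :=
  if arcOf e ∈ X then
    (if f (arcOf e).1 (arcOf e).2 ≠ fp (arcOf e).1 (arcOf e).2 then -1 else 1)
  else 0

omit [Fintype V] in
theorem cycleWeight_eq_sum_stepWeight (X : Finset (V × V)) (f fp : V → V → ℤ)
    (g : List (V × V × Bool)) : cycleWeight X f fp g = (g.map (stepWeight X f fp)).sum :=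
  rfl

omit [Fintype V] [DecidableEq V] in
theorem residualCycle_iff {c f : V → V → ℤ} {g : List (V × V × Bool)} :
    ResidualCycle c f g ↔ g ≠ [] ∧ (g.map (·.1)).Nodup ∧
      g.map (·.2.1) = (g.map (·.1)).rotate 1 ∧ ∀ e ∈ g, IsResidualStep c f e := by
  rw [map_eq_rotate_one_iff]
  rfl

section Push

omit [Fintype V]

theorem push1_eq_add (f : V → V → ℤ) (e : V × V × Bool) : push1 f e = f + stepFlow e := by
  funext u v
  rcases e with ⟨a, b, _ | _⟩ <;> simp only [push1, stepFlow, Pi.add_apply, Prod.mk.injEq] <;> grind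

theorem push_eq_add (f : V → V → ℤ) (g : List (V × V × Bool)) :
    push f g = f + (g.map stepFlow).sum := by
  induction g generalizing f with
  | nil => simp [push]
  | cons e g ih =>
    rw [List.map_cons, List.sum_cons, ← add_assoc, ← push1_eq_add, ← ih]
    rfl

theorem push_apply_of_nodup {g : List (V × V × Bool)} (hg : g.Nodup) (f : V → V → ℤ) (u v : V) :
    push f g u v =
      f u v + (if (u, v, true) ∈ g then 1 else 0) - (if (v, u, false) ∈ g then 1 else 0) := by
  simp only [push_eq_add, Pi.add_apply, Pi.list_sum_apply, List.map_map]
  rw [← List.sum_toFinset _ hg]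
  simp [stepFlow, Function.comp_def, Finset.sum_sub_distrib, add_sub_assoc]

end Push

theorem netOutflow_stepFlow (v : V) (e : V × V × Bool) :
    netOutflow v (stepFlow e) = (if e.1 = v then 1 else 0) - (if e.2.1 = v then 1 else 0) := by
  rcases e with ⟨a, b, _ | _⟩ <;>
    simp [netOutflow, stepFlow, Prod.ext_iff, eq_comm] <;>
    split_ifs <;> simp_all [Finset.filter_eq]

theorem netOutflow_sum_stepFlow {g : List (V × V × Bool)}
    (hg : g.map (·.2.1) = (g.map (·.1)).rotate 1) (v : V) :
    netOutflow v (g.map stepFlow).sum = 0 := by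
  have hperm : ((g : Multiset (V × V × Bool)).map fun e => e.2.1) =
      (g : Multiset (V × V × Bool)).map fun e => e.1 := by
    rw [Multiset.map_coe, Multiset.map_coe, hg]
    exact Multiset.coe_eq_coe.2 (List.rotate_perm _ 1)
  have hsum := congrArg (fun m => (m.map fun x => if x = v then (1 : ℤ) else 0).sum) hperm
  simp only [Multiset.map_map, Function.comp_def] at hsum
  rw [map_list_sum, List.map_map, ← Multiset.sum_coe, ← Multiset.map_coe]
  simp only [Function.comp_def, netOutflow_stepFlow, Multiset.sum_map_sub, hsum, sub_self]

section Flows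

variable {c f f' : V → V → ℤ} {s t : V} {g : List (V × V × Bool)}

omit [DecidableEq V] in
theorem IsZFlow.netOutflow_eq_zero (hf : IsZFlow c s t f) {v : V} (hs : v ≠ s) (ht : v ≠ t) :
    netOutflow v f = 0 :=
  sub_eq_zero.2 (hf.2.2 v hs ht)

omit [DecidableEq V] in
theorem sum_netOutflow (f : V → V → ℤ) : ∑ v, netOutflow v f = 0 := by
  simp only [netOutflow, AddMonoidHom.coe_mk, ZeroHom.coe_mk, sum_sub_distrib]
  rw [sum_comm, sub_self]

omit [Fintype V] [DecidableEq V] in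
theorem ResidualCycle.nodup (hg : ResidualCycle c f g) : g.Nodup :=
  (residualCycle_iff.1 hg).2.1.of_map

theorem netOutflow_push (hg : ResidualCycle c f g) (v : V) :
    netOutflow v (push f g) = netOutflow v f := by
  rw [push_eq_add, map_add, netOutflow_sum_stepFlow (residualCycle_iff.1 hg).2.2.1, add_zero]

theorem IsZFlow.push (hf : IsZFlow c s t f) (hg : ResidualCycle c f g) :
    IsZFlow c s t (push f g) := by
  have hres := (residualCycle_iff.1 hg).2.2.2
  refine ⟨fun u v => ?_, fun u v => ?_, fun v hs ht => ?_⟩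
  · have hlt : (v, u, false) ∈ g → 0 < f u v := hres _
    rw [push_apply_of_nodup hg.nodup]
    have := hf.1 u v
    split_ifs <;> grind
  · have hlt : (u, v, true) ∈ g → f u v < c u v := hres _
    rw [push_apply_of_nodup hg.nodup]
    have := hf.2.1 u v
    split_ifs <;> grind
  · rw [← sub_eq_zero]
    exact (netOutflow_push hg v).trans (hf.netOutflow_eq_zero hs ht)

theorem zvalue_push (hg : ResidualCycle c f g) : zvalue (push f g) s = zvalue f s :=
  netOutflow_push hg s

theorem IsZMaxFlow.push (hf : IsZMaxFlow c s t f) (hg : ResidualCycle c f g) :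
    IsZMaxFlow c s t (push f g) :=
  ⟨hf.1.push hg, fun h hh => zvalue_push hg ▸ hf.2 h hh⟩

end Flows

section Distance

variable {X : Finset (V × V)}

omit [Fintype V] [DecidableEq V] in
theorem natCast_dist (h fp : V → V → ℤ) :
    (dist X h fp : ℤ) = ∑ a ∈ X, if h a.1 a.2 ≠ fp a.1 a.2 then 1 else 0 := by
  simp [_root_.dist, card_filter]

omit [Fintype V] in
theorem ite_arcOf_eq (e : V × V × Bool) (u v : V) (w : ℤ) :
    (if arcOf e = (u, v) then w else 0) =
      (if e = (u, v, true) then w else 0) + (if e = (v, u, false) then w else 0) := by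
  rcases e with ⟨a, b, _ | _⟩ <;> simp only [arcOf, Prod.mk.injEq] <;> grind

omit [Fintype V] in
theorem cycleWeight_eq_sum_arcs (f fp : V → V → ℤ) {g : List (V × V × Bool)} (hg : g.Nodup) :
    cycleWeight X f fp g = ∑ a ∈ X, (if f a.1 a.2 ≠ fp a.1 a.2 then -1 else 1) *
      ((if (a.1, a.2, true) ∈ g then 1 else 0) + (if (a.2, a.1, false) ∈ g then 1 else 0)) := by
  let w : V × V → ℤ := fun a => if f a.1 a.2 ≠ fp a.1 a.2 then -1 else 1
  calc cycleWeight X f fp g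
      = ∑ e ∈ g.toFinset, ∑ a ∈ X, if arcOf e = a then w a else 0 := by
        rw [cycleWeight_eq_sum_stepWeight, ← List.sum_toFinset _ hg]
        exact sum_congr rfl fun e _ => (sum_ite_eq X (arcOf e) w).symm
    _ = _ := by
        rw [sum_comm]
        refine sum_congr rfl fun ⟨u, v⟩ _ => ?_
        simp only [ite_arcOf_eq, sum_add_distrib, sum_ite_eq', List.mem_toFinset, mul_add,
          mul_ite, mul_one, mul_zero, w]

theorem dist_push {c f fp : V → V → ℤ} {s t : V} (hf : IsZFlow c s t f) (hfp : IsZFlow c s t fp)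
    (hX : ∀ e ∈ X, c e.1 e.2 = 1) {g : List (V × V × Bool)} (hg : ResidualCycle c f g) :
    (dist X (push f g) fp : ℤ) = dist X f fp + cycleWeight X f fp g := by
  rw [natCast_dist, natCast_dist, cycleWeight_eq_sum_arcs f fp hg.nodup, ← sum_add_distrib]
  refine sum_congr rfl fun ⟨u, v⟩ ha => ?_
  have hres := (residualCycle_iff.1 hg).2.2.2
  have hfwd : (u, v, true) ∈ g → f u v < c u v := hres _
  have hbwd : (v, u, false) ∈ g → 0 < f u v := hres _
  have := hX _ ha
  have := hf.1 u v; have := hf.2.1 u v; have := hfp.1 u v; have := hfp.2.1 u v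
  rw [push_apply_of_nodup hg.nodup]
  -- on an arc of `X` both flows are `0/1`-valued, so pushing across it toggles agreement with `fp`
  split_ifs <;> grind

end Distance

section Circulation

omit [DecidableEq V] in
theorem netOutflow_sub_eq_zero {c f f' : V → V → ℤ} {s t : V} (hf : IsZFlow c s t f)
    (hf' : IsZFlow c s t f') (hval : zvalue f s = zvalue f' s) (v : V) :
    netOutflow v (f' - f) = 0 := by
  have hne : ∀ w ≠ t, netOutflow w (f' - f) = 0 := by
    intro w hwt
    rw [map_sub, sub_eq_zero]
    by_cases hws : w = s
    · exact hws ▸ hval.symm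
    · rw [hf.netOutflow_eq_zero hws hwt, hf'.netOutflow_eq_zero hws hwt]
  by_cases hvt : v = t
  · rw [hvt, ← sum_eq_single_of_mem t (mem_univ t) fun w _ => hne w, sum_netOutflow]
  · exact hne v hvt

theorem sum_netOutflow_eq_sum_cut (S : Finset V) (φ : V → V → ℤ) :
    ∑ v ∈ S, netOutflow v φ = ∑ v ∈ S, ∑ u ∈ Sᶜ, (φ v u - φ u v) := by
  have hinner : ∑ v ∈ S, ∑ u ∈ S, φ v u = ∑ v ∈ S, ∑ u ∈ S, φ u v := sum_comm
  simp only [netOutflow, AddMonoidHom.coe_mk, ZeroHom.coe_mk, sum_sub_distrib,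
    ← sum_add_sum_compl S, sum_add_distrib]
  linarith

omit [DecidableEq V] in
theorem reflTransGen_of_netOutflow_eq_zero {φ : V → V → ℤ} (hφ : ∀ v, netOutflow v φ = 0)
    {x y : V} (hxy : 0 < φ x y ∨ φ y x < 0) :
    ReflTransGen (fun a b => 0 < φ a b ∨ φ b a < 0) y x := by
  classical
  by_contra hyx
  set S := univ.filter (ReflTransGen (fun a b => 0 < φ a b ∨ φ b a < 0) y)
  have hleave : ∀ v ∈ S, ∀ u ∈ Sᶜ, φ v u ≤ 0 ∧ 0 ≤ φ u v := by
    intro v hv u hu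
    simp only [S, mem_compl, mem_filter, mem_univ, true_and] at hv hu
    by_contra h
    exact hu (hv.tail (by omega))
  have hcut : ∑ v ∈ S, ∑ u ∈ Sᶜ, (φ v u - φ u v) = 0 := by
    rw [← sum_netOutflow_eq_sum_cut, sum_eq_zero fun v _ => hφ v]
  have hy : y ∈ S := by simpa [S] using ReflTransGen.refl
  have hx : x ∈ Sᶜ := by simpa [S] using hyx
  have hterm : φ y x - φ x y = 0 :=
    (sum_eq_zero_iff_of_nonpos fun u hu => by linarith [hleave y hy u hu]).1
      ((sum_eq_zero_iff_of_nonpos fun v hv => sum_nonpos fun u hu => by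
        linarith [hleave v hv u hu]).1 hcut y hy) x hx
  have := hleave y hy x hx
  omega

end Circulation

section NegativeCycle

variable {c f f' : V → V → ℤ} {s t : V} {X : Finset (V × V)}

omit [DecidableEq V] in
theorem exists_residualStep_of_lt (hf' : IsZFlow c s t f') {x y : V}
    (h : f x y < f' x y ∨ f' y x < f y x) :
    ∃ e, IsResidualStep c f e ∧ f (arcOf e).1 (arcOf e).2 ≠ f' (arcOf e).1 (arcOf e).2 ∧
      e.1 = x ∧ e.2.1 = y := by
  rcases h with h | h
  · exact ⟨(x, y, true), h.trans_le (hf'.2.1 x y), h.ne, rfl, rfl⟩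
  · exact ⟨(x, y, false), (hf'.1 y x).trans_lt h, h.ne', rfl, rfl⟩

omit [DecidableEq V] in
theorem exists_residualStep_of_ne (hf' : IsZFlow c s t f') {p q : V} (h : f p q ≠ f' p q) :
    ∃ e, IsResidualStep c f e ∧ arcOf e = (p, q) ∧
      (f e.1 e.2.1 < f' e.1 e.2.1 ∨ f' e.2.1 e.1 < f e.2.1 e.1) := by
  rcases lt_or_gt_of_ne h with h | h
  · exact ⟨(p, q, true), h.trans_le (hf'.2.1 p q), rfl, .inl h⟩
  · exact ⟨(q, p, false), (hf'.1 p q).trans_lt h, rfl, .inr h⟩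

omit [Fintype V] in
theorem stepWeight_nonpos {e : V × V × Bool}
    (h : f (arcOf e).1 (arcOf e).2 ≠ f' (arcOf e).1 (arcOf e).2) : stepWeight X f f' e ≤ 0 := by
  simp only [stepWeight, h, ne_eq, not_false_eq_true, if_true]
  split_ifs <;> norm_num

omit [Fintype V] in
theorem stepWeight_eq_neg_one {e : V × V × Bool} (hX : arcOf e ∈ X)
    (h : f (arcOf e).1 (arcOf e).2 ≠ f' (arcOf e).1 (arcOf e).2) : stepWeight X f f' e = -1 := by
  simp [stepWeight, hX, h]

theorem exists_negCycle_of_ne (hf : IsZFlow c s t f) (hf' : IsZFlow c s t f')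
    (hval : zvalue f s = zvalue f' s) {p q : V} (hpq : (p, q) ∈ X) (hne : f p q ≠ f' p q) :
    ∃ g, ResidualCycle c f g ∧ cycleWeight X f f' g < 0 := by
  obtain ⟨cs, hcs, harc, hdir⟩ := exists_residualStep_of_ne hf' hne
  have hback : ReflTransGen (fun x y => f x y < f' x y ∨ f' y x < f y x) cs.2.1 cs.1 := by
    simpa only [Pi.sub_apply, sub_pos, sub_neg] using
      reflTransGen_of_netOutflow_eq_zero (netOutflow_sub_eq_zero hf hf' hval)
        (by simpa only [Pi.sub_apply, sub_pos, sub_neg] using hdir)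
  obtain ⟨l, hchain, hlast, hnodup⟩ := exists_nodup_isChain_cons_of_reflTransGen hback
  obtain ⟨path, hpath, hsrc, htgt⟩ := exists_steps_of_isChain (·.1) (·.2.1)
    (P := fun e => IsResidualStep c f e ∧ stepWeight X f f' e ≤ 0) <|
    hchain.imp fun x y hxy => by
      obtain ⟨e, hres, hdiff, hx, hy⟩ := exists_residualStep_of_lt hf' hxy
      exact ⟨e, ⟨hres, stepWeight_nonpos hdiff⟩, hx, hy⟩
  have hsrc' : (path ++ [cs]).map (·.1) = cs.2.1 :: l := by
    rw [List.map_append, hsrc, List.map_singleton, ← hlast, List.dropLast_append_getLast]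
  have htgt' : (path ++ [cs]).map (·.2.1) = (cs.2.1 :: l).rotate 1 := by
    simp [htgt, List.rotate_cons_succ]
  have hmem : ∀ e ∈ path ++ [cs], IsResidualStep c f e ∧ stepWeight X f f' e ≤ 0 := by
    simp only [List.mem_append, List.mem_singleton]
    rintro e (he | rfl)
    · exact hpath e he
    · exact ⟨hcs, stepWeight_nonpos (harc ▸ hne)⟩
  refine ⟨path ++ [cs], residualCycle_iff.2 ⟨by simp, hsrc' ▸ hnodup, hsrc' ▸ htgt',
    fun e he => (hmem e he).1⟩, ?_⟩
  have := List.sum_lt_sum (l := path ++ [cs]) (stepWeight X f f') (fun _ => 0)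
    (fun e he => (hmem e he).2)
    ⟨cs, by simp, by rw [stepWeight_eq_neg_one (harc ▸ hpq) (harc ▸ hne)]; norm_num⟩
  simpa [cycleWeight_eq_sum_stepWeight] using this

theorem dist_eq_zero_of_not_exists_negCycle (hf : IsZMaxFlow c s t f) (hf' : IsZMaxFlow c s t f')
    (h : ¬ ∃ g, ResidualCycle c f g ∧ cycleWeight X f f' g < 0) : dist X f f' = 0 :=
  card_eq_zero.2 <| filter_eq_empty_iff.2 fun ⟨_, _⟩ hpq hne =>
    h (exists_negCycle_of_ne hf.1 hf'.1 (le_antisymm (hf'.2 f hf.1) (hf.2 f' hf'.1)) hpq hne)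

end NegativeCycle

/-- repeatedly augmenting a maximal flow along negative-weight residual
cycles terminates after at most `d(f₀, f') ≤ 2 ρ_N P` iterations, at a maximal flow
minimizing the transfer distance `d(·, f')` over all maximal flows. -/
theorem stmt11 (s t : V) (c f' : V → V → ℤ) (X : Finset (V × V)) (rN Pn : ℕ)
    (hX : ∀ e ∈ X, c e.1 e.2 = 1) (hXcard : X.card ≤ 2 * rN * Pn)
    (hf' : IsZMaxFlow c s t f')
    (F : ℕ → V → V → ℤ) (hF0 : IsZMaxFlow c s t (F 0))
    (hstep : ∀ i, (∃ g, ResidualCycle c (F i) g ∧ cycleWeight X (F i) f' g < 0) →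
      ∃ g, ResidualCycle c (F i) g ∧ cycleWeight X (F i) f' g < 0 ∧
        F (i + 1) = push (F i) g)
    (hstop : ∀ i, ¬ (∃ g, ResidualCycle c (F i) g ∧ cycleWeight X (F i) f' g < 0) →
      F (i + 1) = F i) :
    dist X (F 0) f' ≤ 2 * rN * Pn ∧
      ∃ k ≤ dist X (F 0) f',
        (¬ ∃ g, ResidualCycle c (F k) g ∧ cycleWeight X (F k) f' g < 0) ∧
        IsZMaxFlow c s t (F k) ∧
        ∀ h : V → V → ℤ, IsZMaxFlow c s t h → dist X (F k) f' ≤ dist X h f' := by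
  have hmax : ∀ i, IsZMaxFlow c s t (F i) := by
    intro i
    induction i with
    | zero => exact hF0
    | succ i ih =>
      by_cases hneg : ∃ g, ResidualCycle c (F i) g ∧ cycleWeight X (F i) f' g < 0
      · obtain ⟨g, hg, -, hnext⟩ := hstep i hneg
        exact hnext ▸ ih.push hg
      · exact hstop i hneg ▸ ih
  have hdecr : ∀ i, (∃ g, ResidualCycle c (F i) g ∧ cycleWeight X (F i) f' g < 0) →
      dist X (F (i + 1)) f' < dist X (F i) f' := by
    intro i hneg
    obtain ⟨g, hg, hw, hnext⟩ := hstep i hneg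
    have := dist_push (hmax i).1 hf'.1 hX hg
    rw [← hnext] at this
    omega
  obtain ⟨k, hk, hstopk⟩ := exists_le_not_of_decreasing_while (d := fun i => dist X (F i) f') hdecr
  refine ⟨(card_filter_le _ _).trans hXcard, k, hk, hstopk, hmax k, fun h _ => ?_⟩
  rw [dist_eq_zero_of_not_exists_negCycle (hmax k) hf' hstopk]
  exact Nat.zero_le _
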